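/- Let λ₁,…,λ_n be pairwise distinct and define p_i = −Σ_{k=1}^n λ_k^{n−i} μ_k / Δ_k where Δ_k = Π_{j≠k}(λ_k − λ_j). Then the map (λ,μ) ↦ (q,p) with q_i = (−1)^i σ_i(λ) is a canonical (symplectic) transformation: the canonical Poisson brackets transform as {q_i, p_j} = δ_{ij}, {q_i, q_j} = 0, {p_i, p_j} = 0, where {λ_i, μ_j} = δ_{ij}, {λ_i, λ_j} = {μ_i, μ_j} = 0. -/

import Mathlib

open scoped BigOperators

/-- The canonical Poisson bracket on `ℝ^{2n} = (Fin n → ℝ) × (Fin n → ℝ)` with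
coordinates `(λ, μ)`:
`{F,G} = ∑ k (∂F/∂λ_k ∂G/∂μ_k − ∂F/∂μ_k ∂G/∂λ_k)`. -/
noncomputable def poissonBracket {n : ℕ}
    (F G : (Fin n → ℝ) × (Fin n → ℝ) → ℝ)
    (ξ : (Fin n → ℝ) × (Fin n → ℝ)) : ℝ :=
  ∑ k : Fin n,
    (fderiv ℝ F ξ (Pi.single k 1, 0) * fderiv ℝ G ξ (0, Pi.single k 1)
      - fderiv ℝ F ξ (0, Pi.single k 1) * fderiv ℝ G ξ (Pi.single k 1, 0))

/-- The `i`-th elementary symmetric polynomial of `l 0, …, l (n-1)`. -/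
noncomputable def esym (n : ℕ) (l : Fin n → ℝ) (i : ℕ) : ℝ :=
  ∑ t ∈ Finset.powersetCard i (Finset.univ : Finset (Fin n)), ∏ j ∈ t, l j

/-- The Viète coordinate `q_i = (−1)^i σ_i(λ)` (here `i : Fin n` stands for
`i+1 ∈ {1,…,n}`). -/
noncomputable def vieteQ (n : ℕ) (i : Fin n)
    (ξ : (Fin n → ℝ) × (Fin n → ℝ)) : ℝ :=
  (-1 : ℝ) ^ ((i : ℕ) + 1) * esym n ξ.1 ((i : ℕ) + 1)

/-- The conjugate momentum `p_i = −∑_k λ_k^{n−i} μ_k / Δ_k`, where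
`Δ_k = ∏_{j≠k} (λ_k − λ_j)` (again `i : Fin n` stands for `i+1`). -/
noncomputable def vieteP (n : ℕ) (i : Fin n)
    (ξ : (Fin n → ℝ) × (Fin n → ℝ)) : ℝ :=
  -∑ k : Fin n, (ξ.1 k) ^ (n - 1 - (i : ℕ)) * ξ.2 k /
    ∏ j ∈ Finset.univ.erase k, (ξ.1 k - ξ.1 j)

/-!
Put `X_i(λ)_k = -λ_k ^ (n-1-i) / Δ_k`, so that `p_i(λ, μ) = ∑ k, X_i(λ)_k μ_k` is the momentum
function `P_{X_i}` of the vector field `X_i`. Lagrange interpolation of `t ^ (n-1-i)` at the nodes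
`λ_k` gives `dq_a(X_i) = δ_{ai}`: the `X_i` are the coordinate vector fields `∂/∂q_i` of the Viète
chart. For the cotangent lift one computes `{f ∘ fst, g ∘ fst} = 0`, `{f ∘ fst, P_X} = df(X)` and
`{P_X, P_Y} = P_{[Y, X]}`, and coordinate vector fields commute: differentiating the constants
`dq_a(X_j)` along `X_i` and using the symmetry of the Hessian of `q_a` shows that every `dq_a`
kills `[X_i, X_j]`.
-/

open Finset Module Topology

theorem ContinuousLinearMap.apply_eq_sum_smul_single {R M ι : Type*} [Semiring R]
    [TopologicalSpace R] [AddCommMonoid M] [Module R M] [TopologicalSpace M] [Fintype ι]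
    [DecidableEq ι] (L : (ι → R) →L[R] M) (v : ι → R) :
    L v = ∑ k, v k • L (Pi.single k 1) := by
  conv_lhs => rw [← Finset.univ_sum_single v, map_sum]
  refine sum_congr rfl fun k _ ↦ ?_
  rw [← map_smul, ← Pi.single_smul', smul_eq_mul, mul_one]

theorem fderiv_apply_eq_of_forall_add_smul {E : Type*} [NormedAddCommGroup E] [NormedSpace ℝ E]
    {f : E → ℝ} {x v : E} {c : ℝ} (hf : DifferentiableAt ℝ f x)
    (h : ∀ t : ℝ, f (x + t • v) = f x + t * c) : fderiv ℝ f x v = c := by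
  rw [← hf.lineDeriv_eq_fderiv, lineDeriv, funext h]
  simp

theorem isOpen_setOf_injective {ι Y : Type*} [Finite ι] [TopologicalSpace Y] [T2Space Y] :
    IsOpen {f : ι → Y | Function.Injective f} := by
  have h : {f : ι → Y | Function.Injective f} = ⋂ i, ⋂ j, {f | f i = f j → i = j} := by
    ext f
    simp [Function.Injective]
  rw [h]
  refine isOpen_iInter_of_finite fun i ↦ isOpen_iInter_of_finite fun j ↦ ?_
  by_cases hij : i = j
  · simp [hij]
  · simpa [hij] using isOpen_ne_fun (continuous_apply i) (continuous_apply j)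

theorem eq_zero_of_forall_apply_eq_zero_of_biorthogonal {K E ι : Type*} [Field K]
    [AddCommGroup E] [Module K E] [FiniteDimensional K E] [Fintype ι] [DecidableEq ι]
    (hdim : finrank K E = Fintype.card ι)
    {φ : ι → Dual K E} {v : ι → E} (hφv : ∀ a i, φ a (v i) = if a = i then 1 else 0)
    {w : E} (hw : ∀ a, φ a w = 0) : w = 0 := by
  have hsurj : Function.Surjective (LinearMap.pi φ) := fun c ↦
    ⟨∑ i, c i • v i, funext fun a ↦ by simp [hφv]⟩
  have hinj := (LinearMap.injective_iff_surjective_of_finrank_eq_finrank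
    (by simpa using hdim)).mpr hsurj
  exact hinj (by ext a; simp [hw])

theorem VectorField.lieBracket_eq_zero_of_biorthogonal {E ι : Type*} [NormedAddCommGroup E]
    [NormedSpace ℝ E] [FiniteDimensional ℝ E] [Fintype ι] [DecidableEq ι]
    (hdim : finrank ℝ E = Fintype.card ι)
    {q : ι → E → ℝ} {X : ι → E → E} {x : E} (hq : ∀ a, ContDiffAt ℝ 2 (q a) x)
    (hX : ∀ i, DifferentiableAt ℝ (X i) x)
    (hdual : ∀ᶠ y in 𝓝 x, ∀ a i, fderiv ℝ (q a) y (X i y) = if a = i then 1 else 0) (i j : ι) :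
    VectorField.lieBracket ℝ (X i) (X j) x = 0 := by
  refine eq_zero_of_forall_apply_eq_zero_of_biorthogonal hdim
    (φ := fun a ↦ (fderiv ℝ (q a) x : E →ₗ[ℝ] ℝ)) hdual.self_of_nhds fun a ↦ ?_
  have hconst : ∀ i, fderiv ℝ (fun y ↦ fderiv ℝ (q a) y (X i y)) x = 0 := fun i ↦ by
    have h : (fun y ↦ fderiv ℝ (q a) y (X i y)) =ᶠ[𝓝 x] fun _ ↦ if a = i then 1 else 0 :=
      hdual.mono fun y hy ↦ hy a i
    rw [h.fderiv_eq, fderiv_const_apply]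
  simp [fderiv_apply_lieBracket (hq a) (by simp) (hX j) (hX i), hconst]

open Polynomial in
theorem sum_C_mul_prod_erase_X_sub_C_eq_X_pow {F ι : Type*} [Field F] [Fintype ι]
    [DecidableEq ι] {l : ι → F} (hl : Function.Injective l) {d : ℕ} (hd : d < Fintype.card ι) :
    ∑ k, C (l k ^ d / ∏ j ∈ univ.erase k, (l k - l j)) * ∏ j ∈ univ.erase k, (X - C (l j)) =
      X ^ d := by
  have h := Lagrange.eq_interpolate (s := univ) hl.injOn (f := X ^ d)
    (by rw [degree_X_pow, card_univ]; exact_mod_cast hd)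
  rw [h, Lagrange.interpolate_apply]
  refine sum_congr rfl fun k _ ↦ ?_
  simp only [Lagrange.basis, Lagrange.basisDivisor, prod_mul_distrib, ← map_prod,
    prod_inv_distrib, eval_pow, eval_X, div_eq_mul_inv, map_mul, mul_assoc]

section CotangentLift

variable {n : ℕ}

noncomputable def momentum (X : (Fin n → ℝ) → Fin n → ℝ) (ξ : (Fin n → ℝ) × (Fin n → ℝ)) : ℝ :=
  ∑ k, X ξ.1 k * ξ.2 k

variable {f g : (Fin n → ℝ) → ℝ} {X Y : (Fin n → ℝ) → Fin n → ℝ}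
  {ξ : (Fin n → ℝ) × (Fin n → ℝ)}

theorem fderiv_comp_fst_apply (hf : DifferentiableAt ℝ f ξ.1) (v w : Fin n → ℝ) :
    fderiv ℝ (fun ξ ↦ f ξ.1) ξ (v, w) = fderiv ℝ f ξ.1 v :=
  congrArg (· (v, w)) (hf.hasFDerivAt.comp ξ hasFDerivAt_fst).fderiv

theorem fderiv_momentum_apply (hX : DifferentiableAt ℝ X ξ.1) (v w : Fin n → ℝ) :
    fderiv ℝ (momentum X) ξ (v, w) = ∑ k, (X ξ.1 k * w k + ξ.2 k * fderiv ℝ X ξ.1 v k) := by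
  let E := Fin n → ℝ
  have h : HasFDerivAt (momentum X) (∑ k, (X ξ.1 k • ((ContinuousLinearMap.proj k).comp
      (ContinuousLinearMap.snd ℝ E E)) + ξ.2 k • ((ContinuousLinearMap.proj k).comp
      ((fderiv ℝ X ξ.1).comp (ContinuousLinearMap.fst ℝ E E))))) ξ := by
    refine HasFDerivAt.fun_sum fun k _ ↦ ?_
    have hμ := (hasFDerivAt_apply (𝕜 := ℝ) k ξ.2).comp ξ (hasFDerivAt_snd (𝕜 := ℝ) (p := ξ))
    exact ((hasFDerivAt_apply k _).comp ξ (hX.hasFDerivAt.comp ξ hasFDerivAt_fst)).mul hμ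
  simp [h.fderiv]

theorem poissonBracket_comp_fst_comp_fst (hf : DifferentiableAt ℝ f ξ.1)
    (hg : DifferentiableAt ℝ g ξ.1) :
    poissonBracket (fun ξ ↦ f ξ.1) (fun ξ ↦ g ξ.1) ξ = 0 := by
  simp [poissonBracket, fderiv_comp_fst_apply hf, fderiv_comp_fst_apply hg]

theorem poissonBracket_comp_fst_momentum (hf : DifferentiableAt ℝ f ξ.1)
    (hX : DifferentiableAt ℝ X ξ.1) :
    poissonBracket (fun ξ ↦ f ξ.1) (momentum X) ξ = fderiv ℝ f ξ.1 (X ξ.1) := by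
  simp [poissonBracket, fderiv_comp_fst_apply hf, fderiv_momentum_apply hX,
    (fderiv ℝ f ξ.1).apply_eq_sum_smul_single (X ξ.1), Pi.single_apply, mul_comm]

theorem poissonBracket_momentum_momentum (hX : DifferentiableAt ℝ X ξ.1)
    (hY : DifferentiableAt ℝ Y ξ.1) :
    poissonBracket (momentum X) (momentum Y) ξ = momentum (VectorField.lieBracket ℝ Y X) ξ := by
  simp only [poissonBracket, momentum, VectorField.lieBracket, fderiv_momentum_apply hX,
    fderiv_momentum_apply hY, (fderiv ℝ X ξ.1).apply_eq_sum_smul_single (Y ξ.1),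
    (fderiv ℝ Y ξ.1).apply_eq_sum_smul_single (X ξ.1), Pi.zero_apply, Pi.single_apply, mul_zero,
    zero_add, add_zero, mul_ite, mul_one, map_zero, sum_ite_eq', mem_univ, ↓reduceIte,
    Pi.sub_apply, Finset.sum_apply, Pi.smul_apply, smul_eq_mul]
  simp only [sum_mul, mul_sum, sub_mul, sum_sub_distrib]
  congr 1 <;> rw [sum_comm] <;> exact sum_congr rfl fun _ _ ↦ sum_congr rfl fun _ _ ↦ by ring

end CotangentLift

section Viete

open Polynomial

variable {n : ℕ}

noncomputable def vieteCoord (a : Fin n) (l : Fin n → ℝ) : ℝ :=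
  (-1 : ℝ) ^ ((a : ℕ) + 1) * esym n l ((a : ℕ) + 1)

noncomputable def vieteField (i : Fin n) (l : Fin n → ℝ) : Fin n → ℝ :=
  fun k ↦ -(l k ^ (n - 1 - (i : ℕ))) / ∏ j ∈ univ.erase k, (l k - l j)

theorem vieteQ_eq_comp_fst (i : Fin n) : vieteQ n i = fun ξ ↦ vieteCoord i ξ.1 := rfl

theorem vieteP_eq_momentum (i : Fin n) : vieteP n i = momentum (vieteField i) := by
  funext ξ
  simp only [vieteP, momentum, vieteField, ← sum_neg_distrib]
  refine sum_congr rfl fun k _ ↦ ?_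
  ring

theorem vieteCoord_eq_coeff (a : Fin n) (l : Fin n → ℝ) :
    vieteCoord a l = (∏ j, (X - C (l j))).coeff (n - 1 - a) := by
  have hcard : Multiset.card (univ.val.map l) = n := by simp
  have hle : n - 1 - (a : ℕ) ≤ Multiset.card (univ.val.map l) := by omega
  have hprod : ∏ j, (X - C (l j)) = ((univ.val.map l).map fun t ↦ X - C t).prod := by
    rw [Multiset.map_map]
    rfl
  rw [hprod, Multiset.prod_X_sub_C_coeff _ hle, hcard,
    show n - (n - 1 - (a : ℕ)) = a + 1 by omega, Finset.esymm_map_val]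
  rfl

theorem contDiff_vieteCoord (a : Fin n) : ContDiff ℝ 2 (vieteCoord a) := by
  unfold vieteCoord esym
  fun_prop

theorem vieteCoord_add_smul_single (a k : Fin n) (l : Fin n → ℝ) (t : ℝ) :
    vieteCoord a (l + t • Pi.single k 1) =
      vieteCoord a l + t * -(∏ j ∈ univ.erase k, (X - C (l j))).coeff (n - 1 - a) := by
  have hprod : ∏ j, (X - C ((l + t • Pi.single k 1 : Fin n → ℝ) j)) =
      ∏ j, (X - C (l j)) - C t * ∏ j ∈ univ.erase k, (X - C (l j)) := by
    have hrest : ∏ j ∈ univ.erase k, (X - C ((l + t • Pi.single k 1 : Fin n → ℝ) j)) =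
        ∏ j ∈ univ.erase k, (X - C (l j)) :=
      prod_congr rfl fun j hj ↦ by simp [(mem_erase.mp hj).1]
    rw [← mul_prod_erase univ _ (mem_univ k), ← mul_prod_erase univ (fun j ↦ X - C (l j))
      (mem_univ k), hrest]
    simp only [Pi.add_apply, Pi.smul_apply, Pi.single_eq_same, smul_eq_mul, mul_one, map_add]
    ring
  rw [vieteCoord_eq_coeff, vieteCoord_eq_coeff, hprod, coeff_sub, coeff_C_mul]
  ring

theorem fderiv_vieteCoord_single (a k : Fin n) (l : Fin n → ℝ) :
    fderiv ℝ (vieteCoord a) l (Pi.single k 1) =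
      -(∏ j ∈ univ.erase k, (X - C (l j))).coeff (n - 1 - a) :=
  fderiv_apply_eq_of_forall_add_smul ((contDiff_vieteCoord a).differentiable (by simp) l)
    (vieteCoord_add_smul_single a k l)

theorem fderiv_vieteCoord_vieteField {l : Fin n → ℝ} (hl : Function.Injective l) (a i : Fin n) :
    fderiv ℝ (vieteCoord a) l (vieteField i l) = if a = i then 1 else 0 := by
  have hcoeff : (X ^ (n - 1 - (i : ℕ)) : ℝ[X]).coeff (n - 1 - a) = if a = i then 1 else 0 := by
    rw [coeff_X_pow]
    exact if_congr ⟨fun h ↦ by omega, fun h ↦ by omega⟩ rfl rfl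
  rw [← hcoeff, ← sum_C_mul_prod_erase_X_sub_C_eq_X_pow hl (by simp; omega), finsetSum_coeff,
    ContinuousLinearMap.apply_eq_sum_smul_single]
  refine sum_congr rfl fun k _ ↦ ?_
  rw [fderiv_vieteCoord_single, coeff_C_mul, vieteField, smul_eq_mul]
  ring

theorem differentiableAt_vieteField {l : Fin n → ℝ} (hl : Function.Injective l) (i : Fin n) :
    DifferentiableAt ℝ (vieteField i) l := by
  refine differentiableAt_pi.mpr fun k ↦ ?_
  have hΔ : ∏ j ∈ univ.erase k, (l k - l j) ≠ 0 :=
    prod_ne_zero_iff.mpr fun j hj ↦ sub_ne_zero.mpr (hl.ne (mem_erase.mp hj).1.symm)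
  unfold vieteField
  fun_prop (disch := exact hΔ)

theorem lieBracket_vieteField {l : Fin n → ℝ} (hl : Function.Injective l) (i j : Fin n) :
    VectorField.lieBracket ℝ (vieteField i) (vieteField j) l = 0 :=
  VectorField.lieBracket_eq_zero_of_biorthogonal (by simp)
    (fun a ↦ (contDiff_vieteCoord a).contDiffAt) (differentiableAt_vieteField hl)
    (Filter.eventually_of_mem (isOpen_setOf_injective.mem_nhds hl)
      fun _ hy ↦ fderiv_vieteCoord_vieteField hy) i j

end Viete

/-- the Viète coordinates `(q,p)` are Darboux coordinates:
`{q_i,p_j} = δ_{ij}`, `{q_i,q_j} = 0`, `{p_i,p_j} = 0` with respect to the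
canonical Poisson bracket `{λ_i,μ_j} = δ_{ij}` (at points where the `λ_k` are
pairwise distinct). -/
theorem viete_coordinates_are_canonical (n : ℕ)
    (ξ : (Fin n → ℝ) × (Fin n → ℝ)) (hdist : Function.Injective ξ.1) :
    (∀ i j : Fin n, poissonBracket (vieteQ n i) (vieteP n j) ξ
      = if i = j then 1 else 0) ∧
    (∀ i j : Fin n, poissonBracket (vieteQ n i) (vieteQ n j) ξ = 0) ∧
    (∀ i j : Fin n, poissonBracket (vieteP n i) (vieteP n j) ξ = 0) := by
  have hq (i : Fin n) : DifferentiableAt ℝ (vieteCoord i) ξ.1 :=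
    (contDiff_vieteCoord i).differentiable (by simp) ξ.1
  have hX (i : Fin n) : DifferentiableAt ℝ (vieteField i) ξ.1 :=
    differentiableAt_vieteField hdist i
  refine ⟨fun i j ↦ ?_, fun i j ↦ ?_, fun i j ↦ ?_⟩
  · rw [vieteQ_eq_comp_fst, vieteP_eq_momentum, poissonBracket_comp_fst_momentum (hq i) (hX j),
      fderiv_vieteCoord_vieteField hdist]
  · rw [vieteQ_eq_comp_fst, vieteQ_eq_comp_fst, poissonBracket_comp_fst_comp_fst (hq i) (hq j)]
  · rw [vieteP_eq_momentum, vieteP_eq_momentum, poissonBracket_momentum_momentum (hX i) (hX j)]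
    simp [momentum, lieBracket_vieteField hdist]
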